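/- For every finite simple graph G, the hairing H(G) is absolutely palindromic. -/

import Mathlib

open Polynomial

/-- The characteristic polynomial (of the adjacency matrix) of a finite simple graph. -/
noncomputable def charPoly {V : Type*} [Finite V] (G : SimpleGraph V) : Polynomial ℤ :=
  letI := Fintype.ofFinite V
  letI := Classical.decEq V
  letI := Classical.decRel G.Adj
  (SimpleGraph.adjMatrix ℤ G).charpoly

/-- `G` is absolutely palindromic: `|a_i| = |a_(n-i)|` for all `i ≤ n`. -/
def IsAbsPalindromic {V : Type*} [Finite V] (G : SimpleGraph V) : Prop :=
  ∀ i ≤ Nat.card V, |(charPoly G).coeff i| = |(charPoly G).coeff (Nat.card V - i)|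

/-- The hairing of `G`: attach a pendant vertex to every vertex of `G`.
Vertices `(u, false)` form the original graph and `(u, true)` is the pendant at `u`. -/
def hairing {V : Type*} (G : SimpleGraph V) : SimpleGraph (V × Bool) where
  Adj a b := (a.2 = false ∧ b.2 = false ∧ G.Adj a.1 b.1) ∨ (a.1 = b.1 ∧ a.2 ≠ b.2)
  symm := by
    refine ⟨?_⟩
    rintro a b (⟨ha, hb, hadj⟩ | ⟨h1, h2⟩)
    · exact Or.inl ⟨hb, ha, hadj.symm⟩
    · exact Or.inr ⟨h1.symm, h2.symm⟩
  loopless := by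
    refine ⟨?_⟩
    rintro a (⟨_, _, hadj⟩ | ⟨_, h⟩)
    · exact hadj.ne rfl
    · exact h rfl

/-!
If `A` is the adjacency matrix of `G`, the hairing has adjacency matrix `[[A, 1], [1, 0]]`.
Block elimination (the blocks `1` and `λ • 1` commute) gives
`χ_{H(G)}(λ) = det ((λ² - 1) • 1 - λ • A)`, while the reversal is
`λ^{2n} χ_{H(G)}(1/λ) = det ((1 - λ²) • 1 - λ • A)`. So the reversal is `± χ_{H(G)}(-λ)`, and the
coefficients of `λ^i` and `λ^{2n-i}` agree up to sign. Equivalently: `χ_{H(G)}(λ) = λ^n χ_G(λ - 1/λ)`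
and `λ ↦ -1/λ` fixes `λ - 1/λ`.
-/

namespace Polynomial

theorem coeff_comp_neg_X {R : Type*} [CommRing R] (p : R[X]) (i : ℕ) :
    (p.comp (-X)).coeff i = (-1) ^ i * p.coeff i := by
  simpa [mul_comm] using comp_C_mul_X_coeff (p := p) (r := -1) (n := i)

theorem abs_coeff_eq_abs_coeff_natDegree_sub_of_reverse_eq {R : Type*} [CommRing R]
    [LinearOrder R] [IsStrictOrderedRing R] {p : R[X]} {k : ℕ}
    (h : p.reverse = (-1) ^ k * p.comp (-X)) {i : ℕ} (hi : i ≤ p.natDegree) :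
    |p.coeff i| = |p.coeff (p.natDegree - i)| := by
  have hcoeff := Polynomial.ext_iff.mp h i
  rw [coeff_reverse, revAt_le hi, ← C_1, ← C_neg, ← C_pow, coeff_C_mul, coeff_comp_neg_X]
    at hcoeff
  simp [hcoeff, abs_mul]

end Polynomial

namespace Matrix

variable {n R : Type*} [Fintype n] [DecidableEq n] [CommRing R]

/-- Multiply on the right by `fromBlocks D 0 (-C) 1` to clear the lower left block. -/
theorem det_fromBlocks_of_commute_of_isRegular (A B C D : Matrix n n R)
    (hCD : Commute C D) (hD : IsRegular D.det) :
    (fromBlocks A B C D).det = (A * D - B * C).det := by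
  have hmul : fromBlocks A B C D * fromBlocks D 0 (-C) 1 =
      fromBlocks (A * D - B * C) B 0 D := by
    rw [fromBlocks_multiply, hCD.eq]
    simp [sub_eq_add_neg]
  have hdet := congr_arg det hmul
  rw [det_mul, det_fromBlocks_zero₁₂, det_fromBlocks_zero₂₁, det_one, mul_one] at hdet
  exact hD.right.eq_iff.mp hdet

theorem charpoly_comp_neg_X (M : Matrix n n R) :
    M.charpoly.comp (-X) = (-1) ^ Fintype.card n * (-M).charpoly := by
  have hmap : (charmatrix M).map (compRingHom (-X)) = -charmatrix (-M) := by
    ext i j : 1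
    by_cases h : i = j <;> simp [h, neg_add_eq_sub]
  rw [charpoly, ← coe_compRingHom_apply, RingHom.map_det, RingHom.mapMatrix_apply, hmap, det_neg,
    charpoly]

theorem reverse_charpoly_fromBlocks_one_one_zero (A : Matrix n n R) :
    (fromBlocks A 1 1 (0 : Matrix n n R)).charpoly.reverse =
      (-1) ^ Fintype.card n * (fromBlocks A 1 1 (0 : Matrix n n R)).charpoly.comp (-X) := by
  set N : Matrix n n R[X] := 1 - (X : R[X]) • A.map C - (X ^ 2 : R[X]) • 1
  have hrev : (fromBlocks A 1 1 (0 : Matrix n n R)).charpolyRev = N.det := by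
    rw [charpolyRev, fromBlocks_map, fromBlocks_smul, ← fromBlocks_one, sub_eq_add_neg,
      fromBlocks_neg, fromBlocks_add]
    simp [N, pow_two, mul_smul, sub_eq_add_neg]
  have hneg : (-fromBlocks A 1 1 (0 : Matrix n n R)).charpoly = (-N).det := by
    rw [charpoly, fromBlocks_neg, charmatrix_fromBlocks, det_fromBlocks_of_commute_of_isRegular]
    · congr 1
      simp only [N, charmatrix, scalar_apply, ← smul_one_eq_diagonal, RingHom.mapMatrix_apply,
        map_neg, implies_true, Matrix.map_neg, sub_neg_eq_add, neg_zero, map_zero,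
        sub_zero, Algebra.mul_smul_comm, mul_one, smul_add, map_one, Matrix.map_one, neg_neg, neg_sub]
      module
    · simp [Matrix.map_neg]
    · simpa [charmatrix, det_diagonal] using isRegular_X_pow _
  rw [reverse_charpoly, charpoly_comp_neg_X, hrev, hneg, det_neg, Fintype.card_sum]
  simp [pow_add, ← mul_assoc, ← mul_pow]

end Matrix

section Hairing

variable {V : Type*}

theorem charPoly_eq [Fintype V] [DecidableEq V] (G : SimpleGraph V) [DecidableRel G.Adj] :
    charPoly G = (G.adjMatrix ℤ).charpoly := by
  unfold charPoly
  convert rfl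

theorem natDegree_charPoly [Finite V] (G : SimpleGraph V) :
    (charPoly G).natDegree = Nat.card V := by
  classical
  cases nonempty_fintype V
  rw [charPoly_eq, Matrix.charpoly_natDegree_eq_dim, Nat.card_eq_fintype_card]

theorem charPoly_hairing [Fintype V] [DecidableEq V] (G : SimpleGraph V) [DecidableRel G.Adj] :
    charPoly (hairing G) = (Matrix.fromBlocks (G.adjMatrix ℤ) 1 1 (0 : Matrix V V ℤ)).charpoly := by
  classical
  rw [charPoly_eq, ← Matrix.charpoly_reindex
    ((Equiv.prodComm V Bool).trans (Equiv.boolProdEquivSum V))]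
  congr 1
  ext (u | u) (v | v) <;> simp [hairing, SimpleGraph.adjMatrix_apply, Matrix.one_apply]

theorem reverse_charPoly_hairing [Finite V] (G : SimpleGraph V) :
    (charPoly (hairing G)).reverse = (-1) ^ Nat.card V * (charPoly (hairing G)).comp (-X) := by
  classical
  cases nonempty_fintype V
  rw [charPoly_hairing, Matrix.reverse_charpoly_fromBlocks_one_one_zero, Nat.card_eq_fintype_card]

end Hairing

/-- The hairing of any finite simple graph is absolutely palindromic. -/
theorem hairing_isAbsPalindromic {V : Type*} [Finite V] (G : SimpleGraph V) :
    IsAbsPalindromic (hairing G) := by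
  intro i hi
  rw [← natDegree_charPoly] at hi ⊢
  exact abs_coeff_eq_abs_coeff_natDegree_sub_of_reverse_eq (reverse_charPoly_hairing G) hi
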